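/- Let m ≥ 1, n = m+1, h > 0, z_F > 0, and let D ∈ ℝⁿ have entries D_1,…,D_n with D_k > 0 for all k. With the convention v₀ := 0 and D_{k+1/2} := (D_k + D_{k+1})/2, set Term₁(v) = (1/z_F)·Σ_{k=1}^{m} h·D_{k+1/2}·((v_k − v_{k−1})/h)² and S_h = z_F·Σ_{k=1}^{m} h/D_{k+1/2}. If moreover m·h ≤ 1, then for every v ∈ ℝ^m the generalized discrete Poincaré inequality holds: h·Σ_{i=1}^{m} v_i² ≤ S_h·Term₁(v). -/

import Mathlib

open Finset

/-- 1-based access to the entries of a finite vector, with value `0` at index `0`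
and out of range (this encodes the convention `v₀ = 0`). -/
def pad1 {n : ℕ} (v : Fin n → ℝ) : ℕ → ℝ :=
  fun k => if hk : k - 1 < n then (if k = 0 then 0 else v ⟨k - 1, hk⟩) else 0

/-- `D_{k+1/2} = (D_k + D_{k+1})/2` (1-based mathematical indexing). -/
noncomputable def Dhalf {n : ℕ} (D : Fin n → ℝ) (k : ℕ) : ℝ :=
  (pad1 D k + pad1 D (k + 1)) / 2

/-- `Term₁(v) = (1/z_F) Σ_{k=1}^m h D_{k+1/2} ((v_k − v_{k−1})/h)²` with `v₀ = 0`. -/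
noncomputable def term1 (m : ℕ) (h zF : ℝ) (D : Fin (m + 1) → ℝ) (v : Fin m → ℝ) : ℝ :=
  (1 / zF) * ∑ k ∈ Finset.Icc 1 m,
    h * Dhalf D k * ((pad1 v k - pad1 v (k - 1)) / h) ^ 2

/-- `S_h = z_F Σ_{k=1}^m h / D_{k+1/2}`. -/
noncomputable def Sh (m : ℕ) (h zF : ℝ) (D : Fin (m + 1) → ℝ) : ℝ :=
  zF * ∑ k ∈ Finset.Icc 1 m, h / Dhalf D k

/-! With `v₀ = 0`, each `v_i` telescopes as `Σ_{k ≤ i} (v_k − v_{k−1})`, and the weighted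
Cauchy–Schwarz inequality `(Σ d_k)² ≤ (Σ 1/w_k)(Σ w_k d_k²)` with weights `w_k = D_{k+1/2}`
bounds every `v_i²` by `(Σ_k 1/D_{k+1/2})(Σ_k D_{k+1/2} (v_k − v_{k−1})²)`, which is exactly
`S_h · Term₁(v)`. Summing over the `m` indices and using `m h ≤ 1` gives the claim. -/

theorem sq_sum_le_sum_inv_mul_sum_mul_sq {ι : Type*} (s : Finset ι) (d : ι → ℝ) {w : ι → ℝ}
    (hw : ∀ k ∈ s, 0 < w k) :
    (∑ k ∈ s, d k) ^ 2 ≤ (∑ k ∈ s, (w k)⁻¹) * ∑ k ∈ s, w k * d k ^ 2 :=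
  sum_sq_le_sum_mul_sum_of_sq_le_mul s (fun k hk => (inv_pos.2 (hw k hk)).le)
    (fun k hk => mul_nonneg (hw k hk).le (sq_nonneg _))
    (fun k hk => by rw [inv_mul_cancel_left₀ (hw k hk).ne'])

theorem sum_Icc_sub_pred {u : ℕ → ℝ} (hu : u 0 = 0) (i : ℕ) :
    ∑ k ∈ Icc 1 i, (u k - u (k - 1)) = u i := by
  induction i with
  | zero => simp [hu]
  | succ i ih => rw [sum_Icc_succ_top (by omega), ih, Nat.add_sub_cancel]; ring

section Poincare

variable {u w : ℕ → ℝ} {m : ℕ}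

theorem sq_le_sum_inv_mul_sum_mul_sq_sub (hu : u 0 = 0) (hw : ∀ k ∈ Icc 1 m, 0 < w k)
    {i : ℕ} (hi : i ≤ m) :
    u i ^ 2 ≤ (∑ k ∈ Icc 1 m, (w k)⁻¹) * ∑ k ∈ Icc 1 m, w k * (u k - u (k - 1)) ^ 2 := by
  have hsub : Icc 1 i ⊆ Icc 1 m := Icc_subset_Icc_right hi
  rw [← sum_Icc_sub_pred hu i]
  refine (sq_sum_le_sum_inv_mul_sum_mul_sq _ _ fun k hk => hw k (hsub hk)).trans ?_
  exact mul_le_mul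
    (sum_le_sum_of_subset_of_nonneg hsub fun k hk _ => (inv_pos.2 (hw k hk)).le)
    (sum_le_sum_of_subset_of_nonneg hsub fun k hk _ => mul_nonneg (hw k hk).le (sq_nonneg _))
    (sum_nonneg fun k hk => mul_nonneg (hw k (hsub hk)).le (sq_nonneg _))
    (sum_nonneg fun k hk => (inv_pos.2 (hw k hk)).le)

theorem sum_sq_le_mul_sum_inv_mul_sum_mul_sq_sub (hu : u 0 = 0) (hw : ∀ k ∈ Icc 1 m, 0 < w k) :
    ∑ i ∈ Icc 1 m, u i ^ 2 ≤
      m * ((∑ k ∈ Icc 1 m, (w k)⁻¹) * ∑ k ∈ Icc 1 m, w k * (u k - u (k - 1)) ^ 2) := by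
  calc ∑ i ∈ Icc 1 m, u i ^ 2
      ≤ ∑ _i ∈ Icc 1 m, (∑ k ∈ Icc 1 m, (w k)⁻¹) * ∑ k ∈ Icc 1 m, w k * (u k - u (k - 1)) ^ 2 :=
        sum_le_sum fun i hi => sq_le_sum_inv_mul_sum_mul_sq_sub hu hw (mem_Icc.1 hi).2
    _ = _ := by simp

end Poincare

theorem pad1_zero {n : ℕ} (v : Fin n → ℝ) : pad1 v 0 = 0 := by
  simp [pad1]

theorem pad1_succ {n : ℕ} (v : Fin n → ℝ) (i : Fin n) : pad1 v (i + 1) = v i := by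
  simp [pad1]

theorem sum_Icc_pad1 {n : ℕ} (v : Fin n → ℝ) (f : ℝ → ℝ) :
    ∑ k ∈ Icc 1 n, f (pad1 v k) = ∑ i, f (v i) := by
  rw [← Ico_add_one_right_eq_Icc, sum_Ico_eq_sum_range, ← Fin.sum_univ_eq_sum_range]
  simp [add_comm 1, pad1_succ]

theorem Dhalf_pos {n : ℕ} {D : Fin (n + 1) → ℝ} (hD : ∀ k, 0 < D k) {k : ℕ} (hk : k ∈ Icc 1 n) :
    0 < Dhalf D k := by
  obtain ⟨hk1, hkn⟩ := mem_Icc.1 hk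
  obtain ⟨j, rfl⟩ := Nat.exists_eq_add_of_le' hk1
  have h1 := pad1_succ D ⟨j, by omega⟩
  have h2 := pad1_succ D ⟨j + 1, by omega⟩
  simp only at h1 h2
  rw [Dhalf, h1, h2]
  linarith [hD ⟨j, by omega⟩, hD ⟨j + 1, by omega⟩]

theorem Sh_mul_term1 (m : ℕ) {h zF : ℝ} (hh : h ≠ 0) (hzF : zF ≠ 0) (D : Fin (m + 1) → ℝ)
    (v : Fin m → ℝ) :
    Sh m h zF D * term1 m h zF D v = (∑ k ∈ Icc 1 m, (Dhalf D k)⁻¹) *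
      ∑ k ∈ Icc 1 m, Dhalf D k * (pad1 v k - pad1 v (k - 1)) ^ 2 := by
  have hS : ∑ k ∈ Icc 1 m, h / Dhalf D k = h * ∑ k ∈ Icc 1 m, (Dhalf D k)⁻¹ := by
    rw [mul_sum]; rfl
  have hT : ∑ k ∈ Icc 1 m, h * Dhalf D k * ((pad1 v k - pad1 v (k - 1)) / h) ^ 2 =
      (∑ k ∈ Icc 1 m, Dhalf D k * (pad1 v k - pad1 v (k - 1)) ^ 2) / h := by
    rw [sum_div]
    refine sum_congr rfl fun k _ => ?_
    field_simp
  rw [Sh, term1, hS, hT]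
  field_simp

theorem stmt_14_general (m : ℕ) (h zF : ℝ) (hh : 0 < h) (hzF : 0 < zF)
    (hmh : (m : ℝ) * h ≤ 1)
    (D : Fin (m + 1) → ℝ) (hD : ∀ k, 0 < D k) :
    ∀ v : Fin m → ℝ,
      h * ∑ i : Fin m, (v i) ^ 2 ≤ Sh m h zF D * term1 m h zF D v := by
  intro v
  have hw : ∀ k ∈ Icc 1 m, 0 < Dhalf D k := fun k hk => Dhalf_pos hD hk
  have hAB : 0 ≤ Sh m h zF D * term1 m h zF D v := by
    rw [Sh_mul_term1 m hh.ne' hzF.ne']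
    exact mul_nonneg (sum_nonneg fun k hk => (inv_pos.2 (hw k hk)).le)
      (sum_nonneg fun k hk => mul_nonneg (hw k hk).le (sq_nonneg _))
  calc h * ∑ i : Fin m, (v i) ^ 2
      = h * ∑ k ∈ Icc 1 m, pad1 v k ^ 2 := by rw [sum_Icc_pad1 v (· ^ 2)]
    _ ≤ h * (m * (Sh m h zF D * term1 m h zF D v)) := by
        rw [Sh_mul_term1 m hh.ne' hzF.ne']
        gcongr
        exact sum_sq_le_mul_sum_inv_mul_sum_mul_sq_sub (pad1_zero v) hw
    _ = (m * h) * (Sh m h zF D * term1 m h zF D v) := by ring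
    _ ≤ Sh m h zF D * term1 m h zF D v := mul_le_of_le_one_left hAB hmh

theorem stmt_14 (m : ℕ) (hm : 1 ≤ m) (h zF : ℝ) (hh : 0 < h) (hzF : 0 < zF)
    (hmh : (m : ℝ) * h ≤ 1)
    (D : Fin (m + 1) → ℝ) (hD : ∀ k, 0 < D k) :
    ∀ v : Fin m → ℝ,
      h * ∑ i : Fin m, (v i) ^ 2 ≤ Sh m h zF D * term1 m h zF D v :=
  stmt_14_general m h zF hh hzF hmh D hD
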